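/- arXiv:0907.4459 — 4 statements merged into one kernel-verified Lean document; each statement's English description precedes it below -/
import Mathlib

section
/- Every complete graph K_{k+1} with k even admits a hamiltonian decomposition into k/2 edge-disjoint Hamilton cycles together with a transversal: a matching containing exactly one edge from each of the k/2 Hamilton cycles. -/
/-!
Walecki's construction. Write `k = 2m` and take the vertices `ZMod k` together with a point `∞`.
For `i < m`, cycle `i` runs `∞, i, i + 1, i - 1, i + 2, i - 2, …, i + m, ∞`. Each of its edges
`{u, v}` inside `ZMod k` has `u + v ∈ {2i, 2i + 1}`, and its two edges at `∞` end in `i` and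
`i + m`; reading off `i` from the edge shows that the cycles are pairwise edge-disjoint. Then `m`
edge-disjoint Hamilton cycles of `K_{2m+1}` have `m(2m + 1)` edges, all the edges there are, so
they decompose it.

For the transversal, the edge `{b, b + 1}` lies in cycle `i` whenever `b ≡ i [MOD m]`. When `m`
is odd, take `b` the even one of `i, i + m`: the edges `{0, 1}, {2, 3}, …` form a matching. When
`m` is even, take `b = i` for odd `i`, `b = i + m` for even `i ≠ 0`, and the edge `{∞, 0}` for
`i = 0`.
-/

namespace SimpleGraph

variable {V W ι : Type*}

def IsHamiltonianDecomposition [DecidableEq V]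
    (c : ι → Σ v : V, (⊤ : SimpleGraph V).Walk v v) : Prop :=
  (∀ i, (c i).2.IsHamiltonianCycle) ∧
  (∀ i j, i ≠ j → ∀ e, e ∈ (c i).2.edges → e ∉ (c j).2.edges) ∧
  (∀ e ∈ (⊤ : SimpleGraph V).edgeSet, ∃ i, e ∈ (c i).2.edges)

def IsTransversal (c : ι → Σ v : V, (⊤ : SimpleGraph V).Walk v v) (T : ι → Sym2 V) :
    Prop :=
  (∀ i, T i ∈ (c i).2.edges) ∧ (∀ i j, i ≠ j → ∀ x, x ∈ T i → x ∉ T j)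

theorem IsTransversal.eq_of_mem_edges [DecidableEq V]
    {c : ι → Σ v : V, (⊤ : SimpleGraph V).Walk v v} {T : ι → Sym2 V}
    (hc : IsHamiltonianDecomposition c) (hT : IsTransversal c T) {i j : ι}
    (h : T j ∈ (c i).2.edges) : j = i := by
  by_contra hne
  exact hc.2.1 j i hne _ (hT.1 j) h

theorem IsHamiltonianDecomposition.of_pairwise_disjoint [DecidableEq V] [Fintype V] [Fintype ι]
    {c : ι → Σ v : V, (⊤ : SimpleGraph V).Walk v v}
    (hham : ∀ i, (c i).2.IsHamiltonianCycle)
    (hdisj : ∀ i j, i ≠ j → ∀ e, e ∈ (c i).2.edges → e ∉ (c j).2.edges)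
    (hcard : 2 * Fintype.card ι + 1 = Fintype.card V) :
    IsHamiltonianDecomposition c := by
  refine ⟨hham, hdisj, fun e he => ?_⟩
  set S := Finset.univ.biUnion fun i => (c i).2.edges.toFinset
  have hsub : S ⊆ (⊤ : SimpleGraph V).edgeFinset := by
    intro e he
    obtain ⟨i, -, hi⟩ := Finset.mem_biUnion.mp he
    exact mem_edgeFinset.mpr (Walk.edges_subset_edgeSet _ (List.mem_toFinset.mp hi))
  have hcardS : S.card = Fintype.card ι * Fintype.card V := by
    rw [Finset.card_biUnion]
    · simp only [List.toFinset_card_of_nodup (hham _).isCycle.edges_nodup, Walk.length_edges,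
        (hham _).length_eq, Finset.sum_const, Finset.card_univ, smul_eq_mul]
    · intro i _ j _ hij
      exact Finset.disjoint_left.mpr fun e hi hj =>
        hdisj i j hij e (List.mem_toFinset.mp hi) (List.mem_toFinset.mp hj)
  have hS : S = (⊤ : SimpleGraph V).edgeFinset := by
    refine Finset.eq_of_subset_of_card_le hsub ?_
    rw [card_edgeFinset_top_eq_card_choose_two, hcardS, ← hcard, Nat.choose_two_right,
      Nat.add_sub_cancel, show (2 * Fintype.card ι + 1) * (2 * Fintype.card ι)
        = 2 * (Fintype.card ι * (2 * Fintype.card ι + 1)) by ring,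
      Nat.mul_div_cancel_left _ two_pos]
  rw [← mem_edgeFinset, ← hS] at he
  obtain ⟨i, -, hi⟩ := Finset.mem_biUnion.mp he
  exact ⟨i, List.mem_toFinset.mp hi⟩

def mapCycle (f : V ≃ W) (p : Σ v : V, (⊤ : SimpleGraph V).Walk v v) :
    Σ w : W, (⊤ : SimpleGraph W).Walk w w :=
  ⟨_, p.2.map (Iso.completeGraph f).toHom⟩

theorem mem_edges_mapCycle (f : V ≃ W) (p : Σ v : V, (⊤ : SimpleGraph V).Walk v v)
    (e : Sym2 W) : e ∈ (mapCycle f p).2.edges ↔ Sym2.map f.symm e ∈ p.2.edges := by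
  have hf : ⇑(Iso.completeGraph f) = f := rfl
  rw [mapCycle, Walk.edges_map, List.mem_map]
  constructor
  · rintro ⟨e', he', rfl⟩
    simpa [hf, Sym2.map_map] using he'
  · exact fun h => ⟨_, h, by simp [hf, Sym2.map_map]⟩

theorem IsHamiltonianDecomposition.map [DecidableEq V] [DecidableEq W]
    {c : ι → Σ v : V, (⊤ : SimpleGraph V).Walk v v}
    (hc : IsHamiltonianDecomposition c) (f : V ≃ W) :
    IsHamiltonianDecomposition (mapCycle f ∘ c) := by
  obtain ⟨hham, hdisj, hcover⟩ := hc
  refine ⟨fun i => (hham i).map f.bijective, fun i j hij e => ?_, fun e he => ?_⟩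
  · simpa only [Function.comp_apply, mem_edges_mapCycle] using hdisj i j hij _
  · induction e with
    | h a b =>
      obtain ⟨i, hi⟩ := hcover s(f.symm a, f.symm b) (by simpa using he)
      exact ⟨i, by simpa [mem_edges_mapCycle] using hi⟩

theorem IsTransversal.map {c : ι → Σ v : V, (⊤ : SimpleGraph V).Walk v v} {T : ι → Sym2 V}
    (hT : IsTransversal c T) (f : V ≃ W) :
    IsTransversal (mapCycle f ∘ c) (Sym2.map f ∘ T) := by
  obtain ⟨hmem, hmatch⟩ := hT
  refine ⟨fun i => ?_, fun i j hij x hi hj => ?_⟩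
  · simpa [mem_edges_mapCycle, Sym2.map_map] using hmem i
  · simp only [Function.comp_apply, Sym2.mem_map] at hi hj
    obtain ⟨a, ha, rfl⟩ := hi
    obtain ⟨b, hb, hab⟩ := hj
    exact hmatch i j hij a ha (f.injective hab ▸ hb)

def topWalkOfSeq (f : ℕ → V) :
    (n : ℕ) → (∀ j < n, f j ≠ f (j + 1)) → (⊤ : SimpleGraph V).Walk (f 0) (f n)
  | 0, _ => .nil
  | n + 1, h => .cons (h 0 n.succ_pos)
      (topWalkOfSeq (fun j => f (j + 1)) n fun j hj => h (j + 1) (by omega))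

theorem support_topWalkOfSeq (f : ℕ → V) (n : ℕ) (h : ∀ j < n, f j ≠ f (j + 1)) :
    (topWalkOfSeq f n h).support = (List.range (n + 1)).map f := by
  induction n generalizing f with
  | zero => simp [topWalkOfSeq]
  | succ n ih =>
    rw [topWalkOfSeq, Walk.support_cons, ih, List.range_succ_eq_map (n := n + 1)]
    simp

theorem edges_topWalkOfSeq (f : ℕ → V) (n : ℕ) (h : ∀ j < n, f j ≠ f (j + 1)) :
    (topWalkOfSeq f n h).edges = (List.range n).map fun j => s(f j, f (j + 1)) := by
  induction n generalizing f with
  | zero => simp [topWalkOfSeq]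
  | succ n ih =>
    rw [topWalkOfSeq, Walk.edges_cons, ih, List.range_succ_eq_map (n := n)]
    simp

theorem length_topWalkOfSeq (f : ℕ → V) (n : ℕ) (h : ∀ j < n, f j ≠ f (j + 1)) :
    (topWalkOfSeq f n h).length = n := by
  rw [← Walk.length_edges, edges_topWalkOfSeq, List.length_map, List.length_range]

end SimpleGraph

open SimpleGraph

namespace Walecki

variable {k : ℕ}

/-- The zig-zag `0, 1, -1, 2, -2, …`. -/
def offset (j : ℕ) : ℤ := if j % 2 = 0 then -(j / 2 : ℕ) else (j / 2 + 1 : ℕ)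

theorem offset_zero : offset 0 = 0 := by simp [offset]

theorem offset_add_offset_succ (j : ℕ) : offset j + offset (j + 1) = ((j + 1) % 2 : ℕ) := by
  unfold offset; split_ifs <;> omega

theorem offset_pred (hk : Even k) (hk0 : k ≠ 0) : offset (k - 1) = (k / 2 : ℕ) := by
  obtain ⟨m, rfl⟩ := hk
  unfold offset; split_ifs <;> omega

theorem offset_injOn (hk : Even k) {j j' : ℕ} (hj : j < k) (hj' : j' < k)
    (h : (offset j : ZMod k) = offset j') : j = j' := by
  obtain ⟨m, rfl⟩ := hk
  -- the offsets below `2m` lie in `(-m, m]`, so they are distinct modulo `2m`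
  rw [ZMod.intCast_eq_intCast_iff_dvd_sub] at h
  have h0 := Int.eq_zero_of_abs_lt_dvd h (by rw [abs_lt]; unfold offset; split_ifs <;> omega)
  unfold offset at h0; split_ifs at h0 <;> omega

def zigzag (x : ZMod k) (j : ℕ) : Option (ZMod k) :=
  if j < k then some (x + offset j) else none

theorem zigzag_eq_none_iff (x : ZMod k) (j : ℕ) : zigzag x j = none ↔ k ≤ j := by
  simp [zigzag]

theorem zigzag_injOn (hk : Even k) (x : ZMod k) {j j' : ℕ} (hj : j ≤ k) (hj' : j' ≤ k)
    (h : zigzag x j = zigzag x j') : j = j' := by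
  simp only [zigzag] at h
  split_ifs at h with h1 h2 h2
  · exact offset_injOn hk h1 h2 (add_left_cancel (Option.some_injective _ h))
  all_goals omega

theorem zigzag_ne_zigzag_succ (hk : Even k) (x : ZMod k) (j : ℕ) (hj : j < k) :
    zigzag x j ≠ zigzag x (j + 1) := fun h => by
  have := zigzag_injOn hk x (by omega) (by omega) h
  omega

def cycle (hk : Even k) [NeZero k] (x : ZMod k) :
    (⊤ : SimpleGraph (Option (ZMod k))).Walk none none :=
  .cons (by simp [zigzag, NeZero.pos k])
    ((topWalkOfSeq (zigzag x) k (zigzag_ne_zigzag_succ hk x)).copy rfl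
      ((zigzag_eq_none_iff x k).mpr le_rfl))

theorem isHamiltonianCycle_cycle (hk : Even k) [NeZero k] (x : ZMod k) :
    (cycle hk x).IsHamiltonianCycle := by
  rw [Walk.isHamiltonianCycle_iff_isCycle_and_length_eq]
  refine ⟨?_, by simp [cycle, length_topWalkOfSeq, ZMod.card]⟩
  rw [cycle, Walk.cons_isCycle_iff, Walk.isPath_copy, Walk.edges_copy, Walk.isPath_def,
    support_topWalkOfSeq, edges_topWalkOfSeq]
  refine ⟨List.Nodup.map_on (fun j hj j' hj' h => ?_) List.nodup_range, ?_⟩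
  · simp only [List.mem_range] at hj hj'
    exact zigzag_injOn hk x (by omega) (by omega) h
  · simp only [List.mem_map, List.mem_range, not_exists, not_and]
    intro j hj h
    rcases Sym2.eq_iff.mp h with ⟨h1, -⟩ | ⟨h1, h2⟩
    · exact absurd ((zigzag_eq_none_iff x j).mp h1) (by omega)
    · have hj0 := zigzag_injOn hk x (by omega) (by omega) h1
      have := (zigzag_eq_none_iff x (j + 1)).mp h2
      obtain ⟨m, rfl⟩ := hk
      have := NeZero.ne (m + m)
      omega

/-- The index of the Walecki cycle containing an edge. -/
def edgeLabel (k : ℕ) : Sym2 (Option (ZMod k)) → ℕ :=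
  Sym2.lift ⟨fun a b => match a, b with
    | some u, some v => (u + v).val / 2
    | some u, none | none, some u => u.val % (k / 2)
    | none, none => 0, by rintro (_ | _) (_ | _) <;> simp [add_comm]⟩

theorem edgeLabel_of_mem_edges (hk : Even k) [NeZero k] {i : ℕ} (hi : i < k / 2)
    {e : Sym2 (Option (ZMod k))} (he : e ∈ (cycle hk i).edges) : edgeLabel k e = i := by
  rw [cycle, Walk.edges_cons, Walk.edges_copy, edges_topWalkOfSeq, List.mem_cons,
    List.mem_map] at he
  rcases he with rfl | ⟨j, hj, rfl⟩
  · simp only [edgeLabel, zigzag, NeZero.pos k, ↓reduceIte, offset_zero, Int.cast_zero, add_zero,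
      Sym2.lift_mk, ZMod.val_cast_of_lt (by omega : i < k)]
    exact Nat.mod_eq_of_lt hi
  rw [List.mem_range] at hj
  by_cases hjk : j + 1 < k
  · have hsum : ((i : ZMod k) + offset j + ((i : ZMod k) + offset (j + 1)))
        = ((2 * i + (j + 1) % 2 : ℕ) : ZMod k) := by
      have := congrArg (Int.cast : ℤ → ZMod k) (offset_add_offset_succ j)
      generalize (j + 1) % 2 = n at this ⊢
      push_cast at this ⊢
      linear_combination this
    simp only [edgeLabel, zigzag, hj, hjk, if_true, Sym2.lift_mk, hsum]
    rw [ZMod.val_cast_of_lt (by omega)]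
    omega
  · obtain rfl : j = k - 1 := by omega
    have hlast : (i : ZMod k) + offset (k - 1) = ((i + k / 2 : ℕ) : ZMod k) := by
      rw [offset_pred hk (NeZero.ne k)]
      generalize k / 2 = m
      push_cast
      rfl
    simp only [edgeLabel, zigzag, hj, hjk, if_true, if_false, Sym2.lift_mk, hlast]
    rw [ZMod.val_cast_of_lt (by omega), Nat.add_mod_right, Nat.mod_eq_of_lt hi]

theorem isHamiltonianDecomposition (hk : Even k) [NeZero k] :
    IsHamiltonianDecomposition fun i : Fin (k / 2) => ⟨none, cycle hk (i : ℕ)⟩ := by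
  refine .of_pairwise_disjoint (fun i => isHamiltonianCycle_cycle hk _)
    (fun i j hij e hi hj => hij (Fin.ext ?_)) ?_
  · rw [← edgeLabel_of_mem_edges hk i.isLt hi, edgeLabel_of_mem_edges hk j.isLt hj]
  · simp only [Fintype.card_fin, Fintype.card_option, ZMod.card]
    obtain ⟨m, rfl⟩ := hk
    omega

def transversalStart (k i : ℕ) : ℕ := if (i + k / 2) % 2 = 1 then i else i + k / 2

theorem transversalStart_spec (k i : ℕ) :
    transversalStart k i = i ∧ (i + k / 2) % 2 = 1 ∨
      transversalStart k i = i + k / 2 ∧ (i + k / 2) % 2 = 0 := by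
  unfold transversalStart; split_ifs <;> omega

def transversal (k i : ℕ) : Sym2 (Option (ZMod k)) :=
  if k / 2 % 2 = 0 ∧ i = 0 then s(none, some 0)
  else s(some (transversalStart k i : ZMod k), some ((transversalStart k i + 1 : ℕ) : ZMod k))

theorem transversal_mem_edgeSet (hk : Even k) {i : ℕ} (hi : i < k / 2) :
    transversal k i ∈ (⊤ : SimpleGraph (Option (ZMod k))).edgeSet := by
  unfold transversal
  split_ifs
  · simp
  · simp only [mem_edgeSet, top_adj, ne_eq, Option.some.injEq]
    intro h
    have hval := congrArg ZMod.val h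
    have := transversalStart_spec k i
    obtain ⟨m, rfl⟩ := hk
    rw [ZMod.val_cast_of_lt (by omega), ZMod.val_cast_of_lt (by omega)] at hval
    omega

theorem edgeLabel_transversal (hk : Even k) {i : ℕ} (hi : i < k / 2) :
    edgeLabel k (transversal k i) = i := by
  unfold transversal
  split_ifs with h
  · simp [edgeLabel, h.2]
  · have hsum : (transversalStart k i : ZMod k) + ((transversalStart k i + 1 : ℕ) : ZMod k)
        = ((2 * i + 1 : ℕ) : ZMod k) := by
      obtain ⟨m, rfl⟩ := hk
      rcases transversalStart_spec (m + m) i with ⟨hb, -⟩ | ⟨hb, -⟩ <;> rw [hb]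
      · push_cast; ring
      · rw [show (m + m) / 2 = m by omega]
        have := ZMod.natCast_self (m + m)
        push_cast at this ⊢
        linear_combination this
    simp only [edgeLabel, Sym2.lift_mk, hsum]
    rw [ZMod.val_cast_of_lt (by obtain ⟨m, rfl⟩ := hk; omega)]
    omega

/-- In terms of the numbering `0, …, k - 1, ∞ = k` of the vertices. -/
theorem val_of_mem_transversal (hk : Even k) {i : ℕ} (hi : i < k / 2) {x : Option (ZMod k)}
    (hx : x ∈ transversal k i) :
    k / 2 % 2 = 0 ∧ i = 0 ∧ (x.elim k ZMod.val = k ∨ x.elim k ZMod.val = 0) ∨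
      ¬(k / 2 % 2 = 0 ∧ i = 0) ∧
        (x.elim k ZMod.val = transversalStart k i ∨
          x.elim k ZMod.val = transversalStart k i + 1) := by
  unfold transversal at hx
  split_ifs at hx with h
  · rcases Sym2.mem_iff.mp hx with rfl | rfl <;> simp [h]
  · have hb : transversalStart k i + 1 < k := by
      have := transversalStart_spec k i
      obtain ⟨m, rfl⟩ := hk
      omega
    rcases Sym2.mem_iff.mp hx with rfl | rfl <;>
      simp only [h, Option.elim, ZMod.val_cast_of_lt hb,
        ZMod.val_cast_of_lt (by omega : transversalStart k i < k)] <;> simp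

theorem isTransversal (hk : Even k) [NeZero k] :
    IsTransversal (fun i : Fin (k / 2) => ⟨none, cycle hk (i : ℕ)⟩)
      fun i => transversal k i := by
  refine ⟨fun i => ?_, fun i j hij x hi hj => ?_⟩
  · obtain ⟨j, hj⟩ := (isHamiltonianDecomposition hk).2.2 _ (transversal_mem_edgeSet hk i.isLt)
    obtain rfl : j = i := Fin.ext <| by
      rw [← edgeLabel_of_mem_edges hk j.isLt hj, edgeLabel_transversal hk i.isLt]
    exact hj
  · have := val_of_mem_transversal hk i.isLt hi
    have := val_of_mem_transversal hk j.isLt hj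
    have := transversalStart_spec k i
    have := transversalStart_spec k j
    have := Fin.val_ne_of_ne hij
    obtain ⟨m, rfl⟩ := hk
    omega

end Walecki

/-- Every complete graph `K_{k+1}` with `k` even admits a hamiltonian decomposition into
`k/2` edge-disjoint Hamilton cycles, together with a transversal: a matching containing
exactly one edge from each of the `k/2` Hamilton cycles. -/
theorem stmt4 (k : ℕ) (hk : 2 ≤ k) (hke : Even k) :
    ∃ (c : Fin (k / 2) → Σ v : Fin (k + 1), (⊤ : SimpleGraph (Fin (k + 1))).Walk v v)
      (T : Fin (k / 2) → Sym2 (Fin (k + 1))),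
      (∀ i, (c i).2.IsHamiltonianCycle) ∧
      (∀ i j, i ≠ j → ∀ e, e ∈ (c i).2.edges → e ∉ (c j).2.edges) ∧
      (∀ e ∈ (⊤ : SimpleGraph (Fin (k + 1))).edgeSet, ∃ i, e ∈ (c i).2.edges) ∧
      -- the transversal: one edge from each cycle
      (∀ i, T i ∈ (c i).2.edges) ∧
      -- exactly one edge of the matching lies in each cycle
      (∀ i, ∀ e ∈ (c i).2.edges, (∃ j, e = T j) → e = T i) ∧
      -- the transversal is a matching: its edges are pairwise vertex-disjoint
      (∀ i j, i ≠ j → ∀ x : Fin (k + 1), x ∈ T i → x ∉ T j) := by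
  have : NeZero k := ⟨by omega⟩
  let f : Option (ZMod k) ≃ Fin (k + 1) := Fintype.equivOfCardEq (by simp [ZMod.card])
  have hc := (Walecki.isHamiltonianDecomposition hke).map f
  have hT := (Walecki.isTransversal hke).map f
  refine ⟨_, _, hc.1, hc.2.1, hc.2.2, hT.1, fun i e he ⟨j, hj⟩ => ?_, hT.2⟩
  subst hj
  rw [hT.eq_of_mem_edges hc he]
end

section
/- Let G be a k-connected graph and J a set of vertices of G with |J| > k such that J induces a complete subgraph, and let J' = N_G(J) \ J satisfy |J'| ≥ k. Then there exists a matching of size k in G in which every edge joins a vertex of J to a vertex of J'. -/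
/-!
Hall's theorem with deficiency `|J| - k`, applied to the bipartite graph between `J` and
`J' = N(J) \ J`, yields the matching. Its condition holds by `k`-connectivity: if some `s ⊆ J`
had fewer than `|s| - (|J| - k)` neighbours in `J'`, these together with `J \ s` would form a set
of fewer than `k` vertices separating `s` from the rest of `J'`, which has at least `k` vertices.
-/

open Finset

theorem Finset.exists_embedding_of_card_le_biUnion_card_add {ι α : Type*} [Fintype ι]
    [DecidableEq α] (t : ι → Finset α) {m d : ℕ} (hm : m + d ≤ Fintype.card ι)
    (h : ∀ s : Finset ι, #s ≤ #(s.biUnion t) + d) :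
    ∃ (e : Fin m ↪ ι) (f : Fin m → α), Function.Injective f ∧ ∀ i, f i ∈ t (e i) := by
  classical
  -- `d` new targets adjacent to every index restore Hall's condition.
  let t' : ι → Finset (α ⊕ Fin d) := fun i => (t i).disjSum univ
  have hall : ∀ s : Finset ι, #s ≤ #(s.biUnion t') := by
    intro s
    obtain rfl | ⟨i, hi⟩ := s.eq_empty_or_nonempty
    · simp
    calc #s ≤ #((s.biUnion t).disjSum (univ : Finset (Fin d))) := by
          simpa [card_disjSum] using h s
      _ ≤ #(s.biUnion t') := card_le_card fun x hx => by
          rcases x with a | j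
          · obtain ⟨i', hi', ha⟩ := mem_biUnion.mp (inl_mem_disjSum.mp hx)
            exact mem_biUnion.mpr ⟨i', hi', inl_mem_disjSum.mpr ha⟩
          · exact mem_biUnion.mpr ⟨i, hi, inr_mem_disjSum.mpr (mem_univ j)⟩
  obtain ⟨g, hg, hgt⟩ := (all_card_le_biUnion_card_iff_exists_injective t').mp hall
  have hLc : #({i | (g i).isLeft = false} : Finset ι) ≤ d := by
    simpa using card_le_card_of_injOn g
      (t := (univ : Finset (Fin d)).map Function.Embedding.inr)
      (fun i hi => by
        obtain ⟨j, hj⟩ := Sum.isRight_iff.mp (by simpa using (mem_filter.mp hi).2)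
        simp [hj])
      hg.injOn
  have hL : Fintype.card (Fin m) ≤ Fintype.card {i // (g i).isLeft} := by
    have := card_filter_add_card_filter_not (s := (univ : Finset ι)) (fun i => (g i).isLeft)
    simp only [Bool.not_eq_true] at this
    rw [card_univ] at this
    rw [Fintype.card_fin, Fintype.card_subtype]
    omega
  obtain ⟨emb⟩ := Function.Embedding.nonempty_of_card_le hL
  refine ⟨emb.trans (Function.Embedding.subtype _), fun i => (g (emb i)).getLeft (emb i).2,
    fun i j hij => emb.injective (Subtype.ext (hg ?_)), fun i => ?_⟩
  · rw [← Sum.inl_getLeft (g (emb i)) (emb i).2, ← Sum.inl_getLeft (g (emb j)) (emb j).2]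
    exact congrArg Sum.inl hij
  · have := hgt (emb i)
    rw [← Sum.inl_getLeft (g (emb i)) (emb i).2] at this
    exact inl_mem_disjSum.mp this

namespace SimpleGraph

variable {V : Type*} {G : SimpleGraph V}

theorem mem_of_neighbors_subset_union_of_connected {C X : Set V}
    (hC : (G.induce Cᶜ).Connected) (hX : ∀ x ∈ X, ∀ y, G.Adj x y → y ∈ X ∨ y ∈ C)
    {a b : V} (ha : a ∈ X) (haC : a ∉ C) (hbC : b ∉ C) : b ∈ X := by
  by_contra hb
  obtain ⟨p⟩ := hC.preconnected ⟨a, haC⟩ ⟨b, hbC⟩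
  obtain ⟨d, -, hd₁, hd₂⟩ := p.exists_boundary_dart (Subtype.val ⁻¹' X) ha hb
  exact (hX _ hd₁ _ d.adj).elim hd₂ d.snd.2

theorem card_le_card_biUnion_adj_add [DecidableEq V] [DecidableRel G.Adj] {k : ℕ}
    (hconn : ∀ S : Finset V, S.card < k → (G.induce (↑S : Set V)ᶜ).Connected)
    {J A s : Finset V} (hAJ : Disjoint A J) (hJA : ∀ v ∈ J, ∀ w, G.Adj v w → w ∈ J ∨ w ∈ A)
    (hA : k ≤ #A) (hs : s ⊆ J) :
    #s ≤ #(s.biUnion fun v => {w ∈ A | G.Adj v w}) + (#J - k) := by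
  set N := s.biUnion fun v => {w ∈ A | G.Adj v w}
  by_contra! hlt
  obtain ⟨a, ha⟩ : s.Nonempty := card_pos.mp (by omega)
  -- `J \ s` together with the neighbours of `s` in `A` cuts `s` off from the rest of `A`.
  set C := (J \ s) ∪ N
  have hC : #C < k := by
    have hCle : #C ≤ #(J \ s) + #N := card_union_le _ _
    rw [card_sdiff_of_subset hs] at hCle
    have := card_le_card hs
    omega
  have hNA : N ⊆ A := biUnion_subset.mpr fun _ _ => filter_subset _ _
  have haC : a ∉ C := by
    simp only [C, mem_union, mem_sdiff, ha, not_true_eq_false, and_false, false_or]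
    exact fun haN => Finset.disjoint_left.mp hAJ (hNA haN) (hs ha)
  obtain ⟨b, hbA, hbC⟩ := exists_mem_notMem_of_card_lt_card (hC.trans_le hA)
  have hsep : ∀ x ∈ (s : Set V), ∀ y, G.Adj x y → y ∈ (s : Set V) ∨ y ∈ (C : Set V) := by
    intro x hx y hxy
    rcases hJA x (hs hx) y hxy with hyJ | hyA
    · by_cases hys : y ∈ s
      · exact .inl hys
      · exact .inr (mem_union_left _ (mem_sdiff.mpr ⟨hyJ, hys⟩))
    · exact .inr (mem_union_right _ (mem_biUnion.mpr ⟨x, hx, mem_filter.mpr ⟨hyA, hxy⟩⟩))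
  have hbs : b ∈ s :=
    mem_of_neighbors_subset_union_of_connected (hconn C hC) hsep ha haC hbC
  exact Finset.disjoint_left.mp hAJ hbA (hs hbs)

end SimpleGraph

theorem stmt8_general {V : Type*} [Fintype V] (k : ℕ) (G : SimpleGraph V)
    (hconn : ∀ S : Finset V, S.card < k → (G.induce (↑S : Set V)ᶜ).Connected)
    (J : Finset V) (hJ : k < J.card)
    (hJ' : k ≤ (({w | ∃ v ∈ J, G.Adj v w} \ ↑J : Set V)).ncard) :
    ∃ f : Fin k → V × V,
      (∀ i, (f i).1 ∈ J ∧ (f i).2 ∈ ({w | ∃ v ∈ J, G.Adj v w} \ ↑J : Set V) ∧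
        G.Adj (f i).1 (f i).2) ∧
      (∀ i i', i ≠ i' → (f i).1 ≠ (f i').1 ∧ (f i).1 ≠ (f i').2 ∧
        (f i).2 ≠ (f i').1 ∧ (f i).2 ≠ (f i').2) := by
  classical
  set A := ({w | ∃ v ∈ J, G.Adj v w} \ ↑J : Set V).toFinset with hA
  have hAJ : Disjoint A J := Finset.disjoint_left.mpr fun w hw => by simp_all
  have hJA : ∀ v ∈ J, ∀ w, G.Adj v w → w ∈ J ∨ w ∈ A := fun v hv w hvw =>
    or_iff_not_imp_left.mpr fun hw => by simpa [hA, hw] using ⟨v, hv, hvw⟩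
  have hkA : k ≤ #A := by rwa [Set.ncard_eq_toFinset_card'] at hJ'
  obtain ⟨e, f, hf, hft⟩ := exists_embedding_of_card_le_biUnion_card_add
    (fun v : J => {w ∈ A | G.Adj v w}) (m := k) (d := #J - k) (by rw [Fintype.card_coe]; omega) fun s => by
      simpa [image_biUnion, card_image_of_injective _ Subtype.val_injective] using
        G.card_le_card_biUnion_adj_add hconn hAJ hJA hkA (s := s.image Subtype.val)
          (fun v hv => by obtain ⟨v, -, rfl⟩ := mem_image.mp hv; exact v.2)
  have hfA : ∀ i, f i ∈ A ∧ G.Adj (e i) (f i) := fun i => mem_filter.mp (hft i)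
  have hfJ : ∀ i, f i ∉ J := fun i => Finset.disjoint_left.mp hAJ (hfA i).1
  refine ⟨fun i => (e i, f i), fun i => ⟨(e i).2, by simpa [hA] using (hfA i).1, (hfA i).2⟩,
    fun i i' hii' => ⟨fun h => hii' (e.injective (Subtype.ext h)), ?_, ?_, hf.ne hii'⟩⟩
  · exact fun h : (e i : V) = f i' => hfJ i' (h ▸ (e i).2)
  · exact fun h : f i = e i' => hfJ i (h ▸ (e i').2)

/-- In a `k`-connected graph `G`, if `J` induces a complete subgraph with `|J| > k` and
`J' = N_G(J) \ J` has at least `k` elements, then there is a matching of size `k` each of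
whose edges joins a vertex of `J` to a vertex of `J'`. -/
theorem stmt8 {V : Type*} [Fintype V] (k : ℕ) (hk : 1 ≤ k) (G : SimpleGraph V)
    (hcard : k < Fintype.card V)
    (hconn : ∀ S : Finset V, S.card < k → (G.induce (↑S : Set V)ᶜ).Connected)
    (J : Finset V) (hclique : G.IsClique ↑J) (hJ : k < J.card)
    (hJ' : k ≤ (({w | ∃ v ∈ J, G.Adj v w} \ ↑J : Set V)).ncard) :
    ∃ f : Fin k → V × V,
      (∀ i, (f i).1 ∈ J ∧ (f i).2 ∈ ({w | ∃ v ∈ J, G.Adj v w} \ ↑J : Set V) ∧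
        G.Adj (f i).1 (f i).2) ∧
      (∀ i i', i ≠ i' → (f i).1 ≠ (f i').1 ∧ (f i).1 ≠ (f i').2 ∧
        (f i).2 ≠ (f i').1 ∧ (f i).2 ≠ (f i').2) :=
  stmt8_general k G hconn J hJ hJ'
end

section
/- Let C be a cycle of even length n, and let W be a set of m pairwise disjoint gates, where each gate is a pair of adjacent vertices of C, such that exactly m vertices outside C are to be matched, one to a vertex in each gate. Suppose n − m is even. Then one can choose one vertex from each gate so that the chosen vertices divide C into m arcs each of odd length, and consequently the edges consisting of the m gate-to-outside edges together with every second edge along each arc form a perfect matching of the graph on the n + m vertices. -/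
/-!
Order the gates by their position on the path `0, 1, …, n - 1` and choose, in the gate of
rank `r` with base vertex `b`, the vertex `b` or `b + 1` so that the chosen vertex plus `r` is
even. Then every chosen vertex is preceded by an even number of unchosen vertices, i.e. the
chosen vertices cut the cycle into arcs of odd length. Numbering the unchosen vertices from `0`
in increasing order, each unchosen vertex of even number is immediately followed by the next
one; pairing them, together with the gate edges of the chosen vertices, gives a fixed-point-free
involution along edges of the graph, which is a perfect matching.
-/

open Finset Function

theorem SimpleGraph.exists_isPerfectMatching_of_involutive {V : Type*} {G : SimpleGraph V}
    {f : V → V} (hf : Involutive f) (hG : ∀ v, G.Adj v (f v)) :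
    ∃ M : G.Subgraph, M.IsPerfectMatching ∧ ∀ v, M.Adj v (f v) := by
  refine ⟨{ verts := Set.univ
            Adj := fun v w => f v = w
            adj_sub := fun h => h ▸ hG _
            edge_vert := fun _ => trivial
            symm := ⟨fun v w h => h ▸ hf v⟩ }, ?_, fun v => rfl⟩
  rw [SimpleGraph.Subgraph.isPerfectMatching_iff]
  exact fun v => ⟨f v, rfl, fun _ h => Eq.symm h⟩

namespace GatedCycle

variable {n : ℕ}

section Cycle

variable (S : Finset (Fin n))

def freeBelow (a : Fin n) : ℕ := #(Iio a \ S)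

theorem freeBelow_add_one_eq_card_compl {a : Fin n} (ha : a.val + 1 = n) (haS : a ∉ S) :
    freeBelow S a + 1 = #Sᶜ := by
  have hSc : Sᶜ = insert a (Iio a \ S) := by
    ext x
    rcases eq_or_ne x a with rfl | hx
    · simp [haS]
    · have := x.isLt
      simp only [mem_compl, mem_insert, hx, mem_sdiff, mem_Iio, Fin.lt_def, false_or,
        iff_and_self]
      rw [Ne, Fin.ext_iff] at hx
      omega
  rw [hSc, card_insert_of_notMem (by simp), freeBelow]

variable [NeZero n]

theorem freeBelow_add_one {a : Fin n} (ha : a.val + 1 < n) :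
    freeBelow S (a + 1) = freeBelow S a + if a ∈ S then 0 else 1 := by
  have hIio : Iio (a + 1) = insert a (Iio a) := by
    ext x
    simp only [mem_Iio, mem_insert, Fin.lt_def, Fin.ext_iff, Fin.val_add_one_of_lt' ha]
    omega
  unfold freeBelow
  split_ifs with haS
  · rw [hIio, insert_sdiff_of_mem _ haS, add_zero]
  · rw [hIio, insert_sdiff_of_notMem _ haS, card_insert_of_notMem (by simp)]

theorem add_one_notMem_of_even (hS : ∀ s ∈ S, Even (freeBelow S s)) (hSc : Even #Sᶜ)
    {a : Fin n} (ha : a ∉ S) (h : Even (freeBelow S a)) :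
    a + 1 ∉ S ∧ ¬Even (freeBelow S (a + 1)) := by
  have hlt : a.val + 1 < n := by
    refine lt_of_le_of_ne a.isLt fun hlast => ?_
    rw [← freeBelow_add_one_eq_card_compl S hlast ha] at hSc
    exact (Nat.even_add_one.1 · h) hSc
  have hodd : ¬Even (freeBelow S (a + 1)) := by
    rw [freeBelow_add_one S hlt, if_neg ha]
    exact (Nat.even_add_one.1 · h)
  exact ⟨fun hmem => hodd (hS _ hmem), hodd⟩

theorem sub_one_notMem_of_not_even (hS : ∀ s ∈ S, Even (freeBelow S s))
    {a : Fin n} (ha : a ∉ S) (h : ¬Even (freeBelow S a)) :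
    a - 1 ∉ S ∧ Even (freeBelow S (a - 1)) := by
  have ha0 : a ≠ 0 := by
    rintro rfl
    rw [freeBelow, Iio_eq_empty.2 (isMin_iff_forall_not_lt.2 Fin.not_lt_zero)] at h
    exact h (by simp)
  have hstep := freeBelow_add_one S (a := a - 1) (by
    rw [Fin.val_sub_one_of_ne_zero ha0]
    have := a.isLt
    omega)
  rw [sub_add_cancel] at hstep
  by_cases hmem : a - 1 ∈ S
  · rw [if_pos hmem, add_zero] at hstep
    exact absurd (hstep ▸ hS _ hmem) h
  · rw [if_neg hmem] at hstep
    rw [hstep] at h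
    exact ⟨hmem, not_not.1 (Nat.even_add_one.not.1 h)⟩

def cyclePartner (a : Fin n) : Fin n :=
  if Even (freeBelow S a) then a + 1 else a - 1

theorem cyclePartner_eq_or (a : Fin n) :
    cyclePartner S a = a + 1 ∨ cyclePartner S a + 1 = a := by
  unfold cyclePartner
  split_ifs
  exacts [Or.inl rfl, Or.inr (sub_add_cancel a 1)]

theorem cyclePartner_notMem (hS : ∀ s ∈ S, Even (freeBelow S s)) (hSc : Even #Sᶜ)
    {a : Fin n} (ha : a ∉ S) : cyclePartner S a ∉ S := by
  unfold cyclePartner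
  split_ifs with h
  exacts [(add_one_notMem_of_even S hS hSc ha h).1, (sub_one_notMem_of_not_even S hS ha h).1]

theorem cyclePartner_cyclePartner (hS : ∀ s ∈ S, Even (freeBelow S s)) (hSc : Even #Sᶜ)
    {a : Fin n} (ha : a ∉ S) : cyclePartner S (cyclePartner S a) = a := by
  by_cases h : Even (freeBelow S a)
  · have hodd := (add_one_notMem_of_even S hS hSc ha h).2
    simp only [cyclePartner, if_pos h, if_neg hodd, add_sub_cancel_right]
  · have heven := (sub_one_notMem_of_not_even S hS ha h).2
    simp only [cyclePartner, if_neg h, if_pos heven, sub_add_cancel]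

end Cycle

section Gates

variable {m : ℕ} (g : Fin m → Fin n)

def gateRank (i : Fin m) : ℕ := #{j | g j < g i}

theorem gateRank_eq_of_val_add_one_eq (hinj : Injective g) {i : Fin m}
    (hi : (g i).val + 1 = n) : gateRank g i = m - 1 := by
  have hbelow : ({j | g j < g i} : Finset (Fin m)) = univ.erase i := by
    ext j
    simp only [mem_filter, mem_univ, true_and, mem_erase, and_true]
    refine ⟨fun h hji => (hji ▸ h).false, fun hji => ?_⟩
    have hne := hinj.ne hji
    have := (g j).isLt
    rw [Ne, Fin.ext_iff] at hne
    rw [Fin.lt_def]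
    omega
  rw [gateRank, hbelow, card_erase_of_mem (mem_univ i), card_univ, Fintype.card_fin]

variable [NeZero n]

def chosenVertex (i : Fin m) : Fin n :=
  if Even ((g i).val + gateRank g i) then g i else g i + 1

theorem chosenVertex_eq_or (i : Fin m) :
    chosenVertex g i = g i ∨ chosenVertex g i = g i + 1 := by
  unfold chosenVertex
  split_ifs
  exacts [Or.inl rfl, Or.inr rfl]

theorem val_chosenVertex (hinj : Injective g) (hnm : Even (n - m)) (i : Fin m) :
    (chosenVertex g i).val = (g i).val + ((g i).val + gateRank g i) % 2 := by
  unfold chosenVertex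
  split_ifs with h
  · rw [Nat.even_iff.1 h, add_zero]
  · rw [Nat.not_even_iff.1 h]
    refine Fin.val_add_one_of_lt' (lt_of_le_of_ne (g i).isLt fun hlast => h ?_)
    -- the gate `{n - 1, 0}` comes last, and there `n - m` even forces the choice `n - 1`
    have hmn : m ≤ n := by simpa using Fintype.card_le_of_injective g hinj
    have := i.pos
    rw [gateRank_eq_of_val_add_one_eq g hinj hlast]
    rw [Nat.even_iff] at hnm ⊢
    omega

theorem chosenVertex_lt_chosenVertex (hinj : Injective g)
    (hsep : ∀ i j, i ≠ j → g i + 1 ≠ g j) (hnm : Even (n - m)) {i j : Fin m}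
    (h : g j < g i) : chosenVertex g j < chosenVertex g i := by
  have hgap : (g j).val + 1 < (g i).val := by
    have hsucc := hsep j i (fun e => (e ▸ h).false)
    have := (g i).isLt
    rw [Fin.lt_def] at h
    rw [Ne, Fin.ext_iff, Fin.val_add_one_of_lt' (by omega)] at hsucc
    omega
  rw [Fin.lt_def, val_chosenVertex g hinj hnm, val_chosenVertex g hinj hnm]
  omega

theorem chosenVertex_lt_chosenVertex_iff (hinj : Injective g)
    (hsep : ∀ i j, i ≠ j → g i + 1 ≠ g j) (hnm : Even (n - m)) {i j : Fin m} :
    chosenVertex g j < chosenVertex g i ↔ g j < g i := by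
  refine ⟨fun h => ?_, chosenVertex_lt_chosenVertex g hinj hsep hnm⟩
  rcases lt_trichotomy (g j) (g i) with hlt | heq | hgt
  · exact hlt
  · exact absurd h (hinj heq ▸ lt_irrefl _)
  · exact absurd h (chosenVertex_lt_chosenVertex g hinj hsep hnm hgt).asymm

theorem chosenVertex_injective (hinj : Injective g) (hsep : ∀ i j, i ≠ j → g i + 1 ≠ g j)
    (hnm : Even (n - m)) : Injective (chosenVertex g) := by
  intro i j h
  apply hinj
  refine le_antisymm ?_ ?_ <;>
    rw [← not_lt, ← chosenVertex_lt_chosenVertex_iff g hinj hsep hnm, h] <;> exact lt_irrefl _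

theorem even_freeBelow_chosenVertex (hinj : Injective g)
    (hsep : ∀ i j, i ≠ j → g i + 1 ≠ g j) (hnm : Even (n - m)) (i : Fin m) :
    Even (freeBelow (univ.image (chosenVertex g)) (chosenVertex g i)) := by
  have hchosen : Iio (chosenVertex g i) ∩ univ.image (chosenVertex g) =
      ({j | g j < g i} : Finset (Fin m)).image (chosenVertex g) := by
    ext x
    simp only [mem_inter, mem_Iio, mem_image, mem_univ, true_and, mem_filter]
    constructor
    · rintro ⟨hx, j, rfl⟩
      exact ⟨j, (chosenVertex_lt_chosenVertex_iff g hinj hsep hnm).1 hx, rfl⟩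
    · rintro ⟨j, hj, rfl⟩
      exact ⟨(chosenVertex_lt_chosenVertex_iff g hinj hsep hnm).2 hj, j, rfl⟩
  have hcount :=
    card_sdiff_add_card_inter (Iio (chosenVertex g i)) (univ.image (chosenVertex g))
  rw [hchosen, card_image_of_injective _ (chosenVertex_injective g hinj hsep hnm),
    Fin.card_Iio, val_chosenVertex g hinj hnm] at hcount
  rw [freeBelow, Nat.even_iff]
  unfold gateRank at hcount
  omega

end Gates

variable [NeZero n]

noncomputable def matchPartner {m : ℕ} (c : Fin m → Fin n) : Fin n ⊕ Fin m → Fin n ⊕ Fin m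
  | .inl a => if h : ∃ i, c i = a then .inr h.choose else .inl (cyclePartner (univ.image c) a)
  | .inr i => .inl (c i)

variable {m : ℕ} {c : Fin m → Fin n}

theorem matchPartner_inl_apply (hc : Injective c) (i : Fin m) :
    matchPartner c (.inl (c i)) = .inr i := by
  have h : ∃ j, c j = c i := ⟨i, rfl⟩
  rw [matchPartner, dif_pos h, hc h.choose_spec]

theorem matchPartner_inl_of_notMem {a : Fin n} (ha : a ∉ univ.image c) :
    matchPartner c (.inl a) = .inl (cyclePartner (univ.image c) a) := by
  rw [matchPartner, dif_neg (by simpa using ha)]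

theorem matchPartner_involutive (hc : Injective c) (hnm : Even (n - m))
    (hS : ∀ i, Even (freeBelow (univ.image c) (c i))) : Involutive (matchPartner c) := by
  have hS' : ∀ s ∈ univ.image c, Even (freeBelow (univ.image c) s) := by simpa using hS
  have hSc : Even #(univ.image c)ᶜ := by
    rwa [card_compl, card_image_of_injective _ hc, card_univ, Fintype.card_fin, Fintype.card_fin]
  rintro (a | i)
  · by_cases ha : a ∈ univ.image c
    · obtain ⟨i, -, rfl⟩ := mem_image.1 ha
      rw [matchPartner_inl_apply hc]
      rfl
    · rw [matchPartner_inl_of_notMem ha,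
        matchPartner_inl_of_notMem (cyclePartner_notMem _ hS' hSc ha),
        cyclePartner_cyclePartner _ hS' hSc ha]
  · exact matchPartner_inl_apply hc i

end GatedCycle

open GatedCycle in
theorem stmt11_general (n m : ℕ) [NeZero n]
    (hnm : Even (n - m))
    (g : Fin m → Fin n)
    (hg : ∀ i i', i ≠ i' →
      g i ≠ g i' ∧ g i ≠ g i' + 1 ∧ g i + 1 ≠ g i' ∧ g i + 1 ≠ g i' + 1)
    (G : SimpleGraph (Fin n ⊕ Fin m))
    (hG : ∀ x y, G.Adj x y ↔
      (∃ a : Fin n, (x = .inl a ∧ y = .inl (a + 1)) ∨ (x = .inl (a + 1) ∧ y = .inl a)) ∨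
      (∃ i : Fin m,
        (x = .inr i ∧ (y = .inl (g i) ∨ y = .inl (g i + 1))) ∨
        (y = .inr i ∧ (x = .inl (g i) ∨ x = .inl (g i + 1))))) :
    ∃ c : Fin m → Fin n, (∀ i, c i = g i ∨ c i = g i + 1) ∧
      ∃ M : G.Subgraph, M.IsPerfectMatching ∧
        (∀ i : Fin m, M.Adj (.inr i) (.inl (c i))) := by
  have hinj : Injective g := fun i j h => by_contra fun hij => (hg i j hij).1 h
  have hsep : ∀ i j, i ≠ j → g i + 1 ≠ g j := fun i j hij => (hg i j hij).2.2.1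
  have hc := chosenVertex_injective g hinj hsep hnm
  have hgate (i : Fin m) : (.inl (chosenVertex g i) : Fin n ⊕ Fin m) = .inl (g i) ∨
      (.inl (chosenVertex g i) : Fin n ⊕ Fin m) = .inl (g i + 1) := by
    simpa using chosenVertex_eq_or g i
  have hadj (x : Fin n ⊕ Fin m) : G.Adj x (matchPartner (chosenVertex g) x) := by
    rw [hG]
    rcases x with a | i
    · by_cases ha : a ∈ univ.image (chosenVertex g)
      · obtain ⟨i, -, rfl⟩ := mem_image.1 ha
        exact .inr ⟨i, .inr ⟨matchPartner_inl_apply hc i, hgate i⟩⟩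
      · rw [matchPartner_inl_of_notMem ha]
        rcases cyclePartner_eq_or (univ.image (chosenVertex g)) a with h | h
        · exact .inl ⟨a, .inl ⟨rfl, congrArg _ h⟩⟩
        · exact .inl ⟨_, .inr ⟨congrArg _ h.symm, rfl⟩⟩
    · exact .inr ⟨i, .inl ⟨rfl, hgate i⟩⟩
  obtain ⟨M, hM, hMadj⟩ := SimpleGraph.exists_isPerfectMatching_of_involutive
    (matchPartner_involutive hc hnm (even_freeBelow_chosenVertex g hinj hsep hnm)) hadj
  exact ⟨chosenVertex g, chosenVertex_eq_or g, M, hM, fun i => hMadj (.inr i)⟩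

/-- Let `C` be a cycle of even length `n` (vertices `Fin n`, edges `a — a+1`), with `m`
pairwise disjoint gates `{g i, g i + 1}` and `m` outside vertices, the `i`-th adjacent to
both vertices of the `i`-th gate. If `n - m` is even, one can choose one vertex `c i` from
each gate so that there is a perfect matching of the whole graph matching each outside
vertex `i` to its chosen gate vertex `c i` (the remaining matching edges being cycle
edges). -/
theorem stmt11 (n m : ℕ) [NeZero n] (hn : 3 ≤ n) (hne : Even n) (hmn : m ≤ n)
    (hnm : Even (n - m))
    (g : Fin m → Fin n)
    (hg : ∀ i i', i ≠ i' →
      g i ≠ g i' ∧ g i ≠ g i' + 1 ∧ g i + 1 ≠ g i' ∧ g i + 1 ≠ g i' + 1)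
    (G : SimpleGraph (Fin n ⊕ Fin m))
    (hG : ∀ x y, G.Adj x y ↔
      (∃ a : Fin n, (x = .inl a ∧ y = .inl (a + 1)) ∨ (x = .inl (a + 1) ∧ y = .inl a)) ∨
      (∃ i : Fin m,
        (x = .inr i ∧ (y = .inl (g i) ∨ y = .inl (g i + 1))) ∨
        (y = .inr i ∧ (x = .inl (g i) ∨ x = .inl (g i + 1))))) :
    ∃ c : Fin m → Fin n, (∀ i, c i = g i ∨ c i = g i + 1) ∧
      ∃ M : G.Subgraph, M.IsPerfectMatching ∧
        (∀ i : Fin m, M.Adj (.inr i) (.inl (c i))) :=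
  stmt11_general n m hnm g hg G hG
end

section
/- Let k be even and let K_{k+1} have vertex set {1,…,k,*} with the canonical colouring in which edge uv (u,v ∈ {1,…,k}) has colour ⌈(u+v)/2⌉ mod k/2 and edges *i and *(i+k/2) have colour i. If k ≡ 2 (mod 4), then the set of edges {2i, 2i+1} for i = 0,…,k/2 − 1 (vertex labels mod k) is a matching containing exactly one edge of each colour class. -/
/-- For `k ≡ 2 (mod 4)`, in the canonical colouring of `K_{k+1}` on `{1,…,k,*}` (labels
mod `k`, encoded in `ZMod k`) where edge `uv` has colour `⌈(u+v)/2⌉ mod k/2`, the set of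
edges `{2i, 2i+1}`, `i = 0,…,k/2 - 1`, is a matching containing exactly one edge of each
colour class. -/
theorem stmt18 (k : ℕ) (hk : 2 ≤ k) (hk4 : k % 4 = 2)
    (col : ZMod k → ZMod k → ZMod (k / 2))
    (hcol : ∀ u v : ZMod k,
      col u v = ((((u + v).val + 1) / 2 : ℕ) : ZMod (k / 2))) :
    -- the edges {2i, 2i+1} are pairwise vertex-disjoint (and each is a genuine edge)
    (∀ i : Fin (k / 2), ((2 * (i : ℕ) : ℕ) : ZMod k) ≠ ((2 * (i : ℕ) + 1 : ℕ) : ZMod k)) ∧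
    (∀ i i' : Fin (k / 2), i ≠ i' →
      ((2 * (i : ℕ) : ℕ) : ZMod k) ≠ ((2 * (i' : ℕ) : ℕ) : ZMod k) ∧
      ((2 * (i : ℕ) : ℕ) : ZMod k) ≠ ((2 * (i' : ℕ) + 1 : ℕ) : ZMod k) ∧
      ((2 * (i : ℕ) + 1 : ℕ) : ZMod k) ≠ ((2 * (i' : ℕ) : ℕ) : ZMod k) ∧
      ((2 * (i : ℕ) + 1 : ℕ) : ZMod k) ≠ ((2 * (i' : ℕ) + 1 : ℕ) : ZMod k)) ∧
    -- exactly one edge of each colour class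
    (∀ c : ZMod (k / 2), ∃! i : Fin (k / 2),
      col ((2 * (i : ℕ) : ℕ) : ZMod k) ((2 * (i : ℕ) + 1 : ℕ) : ZMod k) = c) := by
  have hnpos : 0 < (k / 2) := by omega
  have hnodd : (k / 2) % 2 = 1 := by omega
  haveI : NeZero (k / 2) := ⟨hnpos.ne'⟩
  -- helper: distinctness via ModEq
  have hne : ∀ a b : ℕ, a < k → b < k → a ≠ b →
      ((a : ZMod (k)) ≠ (b : ZMod (k))) := by
    intro a b ha hb hab h
    rw [ZMod.natCast_eq_natCast_iff, Nat.ModEq, Nat.mod_eq_of_lt ha, Nat.mod_eq_of_lt hb] at h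
    exact hab h
  refine ⟨?_, ?_, ?_⟩
  · intro i
    have hi := i.2
    exact hne _ _ (by omega) (by omega) (by omega)
  · intro i i' hii
    have hi := i.2
    have hi' := i'.2
    have hne' : (i : ℕ) ≠ (i' : ℕ) := fun h => hii (Fin.ext h)
    exact ⟨hne _ _ (by omega) (by omega) (by omega),
      hne _ _ (by omega) (by omega) (by omega),
      hne _ _ (by omega) (by omega) (by omega),
      hne _ _ (by omega) (by omega) (by omega)⟩
  · -- first compute the colour of edge i
    have key : ∀ i : Fin (k / 2),
        col ((2 * (i : ℕ) : ℕ) : ZMod (k)) ((2 * (i : ℕ) + 1 : ℕ) : ZMod (k))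
          = ((2 * (i : ℕ) + 1 : ℕ) : ZMod (k / 2)) := by
      intro i
      have hi := i.2
      rw [hcol, ← Nat.cast_add]
      have hval : (((2 * (i : ℕ) + (2 * (i : ℕ) + 1) : ℕ) : ZMod (k))).val
          = (4 * (i : ℕ) + 1) % (k) := by
        rw [ZMod.val_natCast]
        congr 1
        ring
      rw [hval]
      rcases lt_or_ge (4 * (i : ℕ) + 1) (k) with h | h
      · rw [Nat.mod_eq_of_lt h]
        congr 1
        omega
      · have hmod : (4 * (i : ℕ) + 1) % (k) = 4 * (i : ℕ) + 1 - k := by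
          rw [Nat.mod_eq_sub_mod h, Nat.mod_eq_of_lt (by omega)]
        rw [hmod]
        have harith : (4 * (i : ℕ) + 1 - k + 1) / 2 = 2 * (i : ℕ) + 1 - (k / 2) := by omega
        rw [harith, ZMod.natCast_eq_natCast_iff]
        have heq : 2 * (i : ℕ) + 1 = (2 * (i : ℕ) + 1 - (k / 2)) + (k / 2) := by omega
        rw [Nat.ModEq]
        conv_rhs => rw [heq, Nat.add_mod_right]
    intro c
    set a := c.val with ha
    have halt : a < (k / 2) := ZMod.val_lt c
    set t := ((k / 2) + 1) / 2 with ht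
    have h2t : 2 * t = (k / 2) + 1 := by omega
    have hmeq : 2 * (t * (a + (k / 2) - 1) % (k / 2)) + 1 ≡ a [MOD k / 2] := by
      calc 2 * (t * (a + (k / 2) - 1) % (k / 2)) + 1
          ≡ 2 * (t * (a + (k / 2) - 1)) + 1 [MOD k / 2] :=
            ((Nat.mod_modEq _ (k / 2)).mul_left 2).add_right 1
        _ = ((k / 2) + 1) * (a + (k / 2) - 1) + 1 := by rw [← mul_assoc, h2t]
        _ ≡ 1 * (a + (k / 2) - 1) + 1 [MOD k / 2] := by
            refine Nat.ModEq.add_right 1 (Nat.ModEq.mul_right _ ?_)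
            simp [Nat.ModEq, Nat.add_mod_left]
        _ = a + (k / 2) := by omega
        _ ≡ a [MOD k / 2] := by
            simp [Nat.ModEq, Nat.add_mod_right]
    refine ⟨⟨t * (a + (k / 2) - 1) % (k / 2), Nat.mod_lt _ hnpos⟩, ?_, ?_⟩
    · beta_reduce
      rw [key]
      calc ((2 * (t * (a + (k / 2) - 1) % (k / 2)) + 1 : ℕ) : ZMod (k / 2))
          = ((a : ℕ) : ZMod (k / 2)) := (ZMod.natCast_eq_natCast_iff _ _ _).2 hmeq
        _ = c := ZMod.natCast_rightInverse c
    · intro j hj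
      rw [key] at hj
      have hj2 : ((2 * (j : ℕ) + 1 : ℕ) : ZMod (k / 2)) = ((a : ℕ) : ZMod (k / 2)) := by
        rw [hj]; exact (ZMod.natCast_rightInverse c).symm
      have hm1 : 2 * (j : ℕ) + 1 ≡ a [MOD k / 2] := (ZMod.natCast_eq_natCast_iff _ _ _).1 hj2
      have h2 : 2 * (j : ℕ) ≡ 2 * (t * (a + (k / 2) - 1) % (k / 2)) [MOD k / 2] :=
        Nat.ModEq.add_right_cancel' 1 (hm1.trans hmeq.symm)
      have hcop : Nat.Coprime 2 (k / 2) := by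
        unfold Nat.Coprime
        rw [Nat.gcd_rec, hnodd]
        simp
      have hjj : (j : ℕ) ≡ t * (a + (k / 2) - 1) % (k / 2) [MOD k / 2] :=
        h2.cancel_left_of_coprime hcop.symm
      have hjlt := j.2
      have hval : (j : ℕ) = t * (a + (k / 2) - 1) % (k / 2) := by
        have h3 := hjj
        rw [Nat.ModEq, Nat.mod_eq_of_lt hjlt, Nat.mod_eq_of_lt (Nat.mod_lt _ hnpos)] at h3
        exact h3
      exact Fin.ext hval
end
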